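/- Let X be an irreducible birth-and-death chain on ⟦b,a⟧ with transition probabilities p_x, q_x and reversible invariant probability measure π. Then: (1) for all b ≤ n < j ≤ a, E[T_{j→n}²] = Σ_{k=n+1}^{j} ( 2 / ( q_k · π(k) ) ) · Σ_{l=k}^{a} E[T_{l→n}] · π(l) − E[T_{j→n}]; and (2) for all b ≤ j < n ≤ a, E[T_{j→n}²] = Σ_{k=j}^{n−1} ( 2 / ( p_k · π(k) ) ) · Σ_{l=b}^{k} E[T_{l→n}] · π(l) − E[T_{j→n}]. -/

import Mathlib

open MeasureTheory Filter Topology ENNReal ProbabilityTheory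

noncomputable section

/-- First time `t ≥ 0` at which the path `ω` visits the set `A`,
with value `⊤` if the path never visits `A`. -/
def hitTime {S : Type*} (A : Set S) (ω : ℕ → S) : ℝ≥0∞ :=
  ⨅ (t : ℕ) (_ : ω t ∈ A), (t : ℝ≥0∞)

/-- First time `t > 0` at which the path `ω` visits the set `A`. -/
def hitTimePos {S : Type*} (A : Set S) (ω : ℕ → S) : ℝ≥0∞ :=
  ⨅ (t : ℕ) (_ : 0 < t) (_ : ω t ∈ A), (t : ℝ≥0∞)

/-- First time `t ≥ r` at which the path `ω` visits the set `A`. -/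
def hitTimeAfter {S : Type*} (A : Set S) (r : ℝ≥0∞) (ω : ℕ → S) : ℝ≥0∞ :=
  ⨅ (t : ℕ) (_ : r ≤ (t : ℝ≥0∞)) (_ : ω t ∈ A), (t : ℝ≥0∞)

/-- One-step transition probabilities of a birth-and-death chain on `ℤ` with
birth rates `p` and death rates `q` (and holding probability `1 - p x - q x`). -/
def bdStep (p q : ℤ → ℝ) (x y : ℤ) : ℝ :=
  if y = x + 1 then p x else if y = x - 1 then q x
  else if y = x then 1 - p x - q x else 0

/-- An irreducible discrete-time birth-and-death chain on the integer interval
`⟦b,a⟧`, given by its transition probabilities `p x = p(x,x+1) > 0` (for `b ≤ x ≤ a-1`),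
`q x = p(x,x-1) > 0` (for `b+1 ≤ x ≤ a`), and by the laws `law x` of the chain started
at `x` on path space `ℕ → ℤ` (characterized by the cylinder/Markov property `markov`). -/
structure BDChain (b a : ℤ) where
  p : ℤ → ℝ
  q : ℤ → ℝ
  law : ℤ → Measure (ℕ → ℤ)
  prob : ∀ x, IsProbabilityMeasure (law x)
  p_pos : ∀ x, b ≤ x → x ≤ a - 1 → 0 < p x
  q_pos : ∀ x, b + 1 ≤ x → x ≤ a → 0 < q x
  p_zero : ∀ x, x < b ∨ a ≤ x → p x = 0
  q_zero : ∀ x, x ≤ b ∨ a < x → q x = 0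
  r_nonneg : ∀ x, b ≤ x → x ≤ a → p x + q x ≤ 1
  init : ∀ x, law x {ω | ω 0 = x} = 1
  markov : ∀ (x : ℤ) (u : ℕ → ℤ) (n : ℕ),
    law x {ω | ∀ i ≤ n + 1, ω i = u i}
      = law x {ω | ∀ i ≤ n, ω i = u i} * ENNReal.ofReal (bdStep p q (u n) (u (n + 1)))

/-- Mean hitting time `E[T_{x → y}]` for the birth-and-death chain `c`. -/
def BDChain.eT {b a : ℤ} (c : BDChain b a) (x y : ℤ) : ℝ≥0∞ :=
  ∫⁻ ω, hitTime {y} ω ∂(c.law x)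

/-- Mean hitting time `E[T_{x → A}]` of a set `A` for the birth-and-death chain `c`. -/
def BDChain.eTset {b a : ℤ} (c : BDChain b a) (x : ℤ) (A : Set ℤ) : ℝ≥0∞ :=
  ∫⁻ ω, hitTime A ω ∂(c.law x)

/-- Second moment `E[T_{x → y}²]` of the hitting time. -/
def BDChain.eT2 {b a : ℤ} (c : BDChain b a) (x y : ℤ) : ℝ≥0∞ :=
  ∫⁻ ω, (hitTime {y} ω) ^ 2 ∂(c.law x)

/-- `π` is the (unique) reversible invariant probability measure of the
birth-and-death chain `c` on `⟦b,a⟧`: it is positive on `⟦b,a⟧`, vanishes outside,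
has total mass one, and satisfies the reversibility (detailed balance) relation
`π(x) q_x = π(x-1) p_{x-1}`. -/
def BDChain.IsStationary {b a : ℤ} (c : BDChain b a) (π : ℤ → ℝ) : Prop :=
  (∀ x, b ≤ x → x ≤ a → 0 < π x) ∧ (∀ x, x < b ∨ a < x → π x = 0) ∧
  (∑ x ∈ Finset.Icc b a, π x) = 1 ∧
  (∀ x, b + 1 ≤ x → x ≤ a → π x * c.q x = π (x - 1) * c.p (x - 1))

/-!
Write `G x = E[T_{x→n}]` and `H x = E[T_{x→n}² + T_{x→n}]`. Since `T > t` exactly when the path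
avoids `n` up to time `t`, both are series of survival probabilities:
`G = Σ_t P(T > t)` and `H = Σ_t (2t + 2) P(T > t)`. The Markov property gives the first-step
recursion `P_x(T > t + 1) = Σ_y p(x,y) P_y(T > t)` for `x ≠ n`, hence `H = 2G + PH` off `n`.
From every state of `⟦b,a⟧` the chain reaches `n` within `a - b` steps with positive
probability, so the survival probabilities decay geometrically and `H` is finite on `⟦b,a⟧`.
Multiplied by `π`, the real equation `(P - I)H + 2G = 0` telescopes by detailed balance: the flux
`π_k q_k (H_k - H_{k-1})` across the edge `{k-1, k}` equals `Σ_{l ≥ k} 2 G_l π_l`. Summing the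
increments of `H` from `n`, where `H = 0`, up to `j` gives (1); (2) is symmetric.
-/

open Finset

section HittingTime

variable {S : Type*} (A : Set S) (ω : ℕ → S)

def avoidUpTo (t : ℕ) : Set (ℕ → S) := {ω | ∀ i ≤ t, ω i ∉ A}

lemma measurableSet_avoidUpTo [MeasurableSpace S] {A : Set S} (hA : MeasurableSet A) (t : ℕ) :
    MeasurableSet (avoidUpTo A t) := by
  simp only [avoidUpTo, Set.ofPred_forall]
  exact .iInter fun i => .iInter fun _ => (hA.compl).preimage (measurable_pi_apply i)

lemma natCast_lt_hitTime_iff (t : ℕ) : (t : ℝ≥0∞) < hitTime A ω ↔ ∀ i ≤ t, ω i ∉ A := by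
  constructor
  · intro h i hi hiA
    have : hitTime A ω ≤ i := iInf₂_le (f := fun (i : ℕ) (_ : ω i ∈ A) => (i : ℝ≥0∞)) i hiA
    exact absurd (h.trans_le this) (not_lt.2 (Nat.cast_le.2 hi))
  · intro h
    have : ((t + 1 : ℕ) : ℝ≥0∞) ≤ hitTime A ω :=
      le_iInf₂ fun i hiA => Nat.cast_le.2 (not_le.1 fun hi => h i hi hiA)
    exact (Nat.cast_lt.2 t.lt_succ_self).trans_le this

lemma hitTime_eq_top_or_natCast : hitTime A ω = ⊤ ∨ ∃ s : ℕ, hitTime A ω = s := by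
  classical
  by_cases h : ∃ t, ω t ∈ A
  · exact Or.inr ⟨Nat.find h, le_antisymm
      (iInf₂_le (f := fun (i : ℕ) (_ : ω i ∈ A) => (i : ℝ≥0∞)) _ (Nat.find_spec h))
      (le_iInf₂ fun i hiA => Nat.cast_le.2 (Nat.find_min' h hiA))⟩
  · push Not at h
    exact Or.inl (by simp [hitTime, h])

lemma tsum_indicator_avoidUpTo (w : ℕ → ℝ≥0∞) :
    ∑' t, (avoidUpTo A t).indicator (fun _ => w t) ω
      = ∑' t : ℕ, if (t : ℝ≥0∞) < hitTime A ω then w t else 0 := by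
  refine tsum_congr fun t => ?_
  simp only [Set.indicator, avoidUpTo, Set.mem_ofPred_eq, ← natCast_lt_hitTime_iff]

lemma tsum_ite_natCast_lt (w : ℕ → ℝ≥0∞) (s : ℕ) :
    ∑' t : ℕ, (if (t : ℝ≥0∞) < s then w t else 0) = ∑ t ∈ range s, w t := by
  rw [tsum_eq_sum (s := range s) fun t ht => if_neg (by simpa using ht)]
  exact sum_congr rfl fun t ht => if_pos (by simpa using ht)

lemma hitTime_eq_tsum_indicator :
    hitTime A ω = ∑' t, (avoidUpTo A t).indicator (fun _ => 1) ω := by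
  rw [tsum_indicator_avoidUpTo A ω fun _ => 1]
  rcases hitTime_eq_top_or_natCast A ω with h | ⟨s, h⟩ <;> rw [h]
  · simp
  · simp [-Nat.cast_lt, tsum_ite_natCast_lt]

lemma hitTime_sq_add_hitTime_eq_tsum_indicator :
    hitTime A ω ^ 2 + hitTime A ω
      = ∑' t, (avoidUpTo A t).indicator (fun _ => 2 * (t : ℝ≥0∞) + 2) ω := by
  rw [tsum_indicator_avoidUpTo]
  rcases hitTime_eq_top_or_natCast A ω with h | ⟨s, h⟩ <;> rw [h]
  · simp only [ENNReal.natCast_lt_top, if_true]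
    refine (top_unique ?_).trans (top_unique ?_).symm
    · exact le_add_left le_rfl
    · calc (⊤ : ℝ≥0∞) = ∑' _ : ℕ, 2 := by simp
        _ ≤ _ := ENNReal.tsum_le_tsum fun t => le_add_self
  · rw [tsum_ite_natCast_lt]
    clear h
    induction s with
    | zero => simp
    | succ s ih => rw [sum_range_succ, ← ih]; push_cast; ring

lemma measurable_hitTime [MeasurableSpace S] [MeasurableSingletonClass S] (n : S) :
    Measurable (hitTime {n}) := by
  rw [funext (hitTime_eq_tsum_indicator {n})]
  exact .tsum fun t => measurable_const.indicator
    (measurableSet_avoidUpTo (measurableSet_singleton n) t)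

end HittingTime

section Prefix

variable {S : Type*}

lemma measurableSet_prefix [MeasurableSpace S] [MeasurableSingletonClass S] (u : ℕ → S)
    (t : ℕ) : MeasurableSet {ω : ℕ → S | ∀ i ≤ t, ω i = u i} := by
  simp only [Set.ofPred_forall]
  exact .iInter fun i => .iInter fun _ =>
    (measurableSet_singleton _).preimage (measurable_pi_apply i)

lemma measurableSet_coord_eq [MeasurableSpace S] [MeasurableSingletonClass S] (t : ℕ) (z : S) :
    MeasurableSet {ω : ℕ → S | ω t = z} :=
  (measurableSet_singleton z).preimage (measurable_pi_apply t)

lemma prefix_inter_eq (u : ℕ → S) (t : ℕ) :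
    {ω : ℕ → S | ∀ i ≤ t, ω i = u i} ∩ {ω | ω (t + 1) = u (t + 1)}
      = {ω | ∀ i ≤ t + 1, ω i = u i} := by
  ext ω
  simp only [Set.mem_inter_iff, Set.mem_ofPred_eq]
  constructor
  · rintro ⟨hω, hωt⟩ i hi
    rcases Nat.le_succ_iff.1 hi with hi | rfl
    exacts [hω i hi, hωt]
  · intro hω
    exact ⟨fun i hi => hω i (hi.trans t.le_succ), hω _ le_rfl⟩

end Prefix

lemma ENNReal.tsum_add_one_mul_pow_div_ne_top {ρ : ℝ≥0∞} (hρ : ρ < 1) {m : ℕ} (hm : 0 < m) :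
    ∑' t : ℕ, ((t : ℝ≥0∞) + 1) * ρ ^ (t / m) ≠ ⊤ := by
  have : NeZero m := ⟨hm.ne'⟩
  have hgeom : ∑' k : ℕ, ((k : ℝ≥0∞) + 1) * ρ ^ k ≠ ⊤ := by
    lift ρ to NNReal using hρ.ne_top
    have hρ' : (ρ : ℝ) < 1 := by exact_mod_cast hρ
    have hsum : Summable fun k : ℕ => ((k : NNReal) + 1) * ρ ^ k := by
      rw [← NNReal.summable_coe]
      push_cast
      simpa [add_mul] using (summable_pow_mul_geometric_of_norm_lt_one 1
        (by simpa using hρ')).add (summable_geometric_of_lt_one ρ.2 hρ')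
    convert ENNReal.tsum_coe_ne_top_iff_summable.2 hsum using 3
    push_cast; rfl
  -- group the times `t = k * m + i` with `i < m` into blocks on which `t / m = k`
  refine ne_top_of_le_ne_top (ENNReal.mul_ne_top (a := (m : ℝ≥0∞) * m) (by finiteness) hgeom) ?_
  calc ∑' t : ℕ, ((t : ℝ≥0∞) + 1) * ρ ^ (t / m)
      = ∑' k : ℕ, ∑' i : Fin m, (((k * m + i : ℕ) : ℝ≥0∞) + 1) * ρ ^ ((k * m + i) / m) := by
        rw [← ENNReal.tsum_prod, ← (Nat.divModEquiv m).symm.tsum_eq]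
        rfl
    _ ≤ ∑' k : ℕ, ∑' _ : Fin m, (m : ℝ≥0∞) * (((k : ℝ≥0∞) + 1) * ρ ^ k) := by
        refine ENNReal.tsum_le_tsum fun k => ENNReal.tsum_le_tsum fun i => ?_
        rw [Nat.add_comm, Nat.add_mul_div_right _ _ hm, Nat.div_eq_of_lt i.2, zero_add, ← mul_assoc]
        gcongr
        exact_mod_cast (show i + k * m + 1 ≤ m * (k + 1) by nlinarith [i.2])
    _ = ((m : ℝ≥0∞) * m) * ∑' k : ℕ, ((k : ℝ≥0∞) + 1) * ρ ^ k := by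
        simp [ENNReal.tsum_mul_left, mul_assoc]

lemma sum_Icc_sub_sub_one (f : ℤ → ℝ) {n j : ℤ} (hnj : n ≤ j) :
    ∑ k ∈ Icc (n + 1) j, (f k - f (k - 1)) = f j - f n := by
  induction j, hnj using Int.leInduction with
  | base => simp
  | succ j hnj ih =>
    rw [← insert_Icc_right_eq_Icc_add_one (by omega), sum_insert (by simp), ih]
    simp

lemma sum_Icc_sub_add_one (f : ℤ → ℝ) {j n : ℤ} (hjn : j ≤ n) :
    ∑ k ∈ Icc j (n - 1), (f k - f (k + 1)) = f j - f n := by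
  induction j, hjn using Int.leInductionDown with
  | base => simp
  | pred j hjn ih =>
    rw [← insert_Icc_left_eq_Icc_sub_one (by omega), sum_insert (by simp), ih]
    simp

theorem flux_eq_sum_Icc_right {p q π f h : ℤ → ℝ} {n a : ℤ} (hpa : p a = 0)
    (hrev : ∀ x, n + 1 < x → x ≤ a → π x * q x = π (x - 1) * p (x - 1))
    (hh : ∀ x, n < x → x ≤ a → p x * (h (x + 1) - h x) + q x * (h (x - 1) - h x) + f x = 0)
    {k : ℤ} (hnk : n < k) (hka : k ≤ a) :
    q k * π k * (h k - h (k - 1)) = ∑ l ∈ Icc k a, π l * f l := by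
  induction k, hka using Int.leInductionDown with
  | base =>
    have := hh a hnk le_rfl
    rw [hpa] at this
    simp only [Icc_self, sum_singleton]
    linear_combination -(π a) * this
  | pred k hka ih =>
    rw [← insert_Icc_left_eq_Icc_sub_one (by omega), sum_insert (by simp), ← ih (by omega)]
    have := hh (k - 1) hnk (by omega)
    have hk := hrev k (by omega) hka
    rw [sub_add_cancel] at this
    linear_combination -(π (k - 1)) * this - (h k - h (k - 1)) * hk

theorem flux_eq_sum_Icc_left {p q π f h : ℤ → ℝ} {b n : ℤ} (hqb : q b = 0)
    (hrev : ∀ x, b < x → x < n → π x * q x = π (x - 1) * p (x - 1))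
    (hh : ∀ x, b ≤ x → x < n → p x * (h (x + 1) - h x) + q x * (h (x - 1) - h x) + f x = 0)
    {k : ℤ} (hbk : b ≤ k) (hkn : k < n) :
    p k * π k * (h k - h (k + 1)) = ∑ l ∈ Icc b k, π l * f l := by
  induction k, hbk using Int.leInduction with
  | base =>
    have := hh b le_rfl hkn
    rw [hqb] at this
    simp only [Icc_self, sum_singleton]
    linear_combination -(π b) * this
  | succ k hbk ih =>
    rw [← insert_Icc_right_eq_Icc_add_one (by omega), sum_insert (by simp), ← ih (by omega)]
    have := hh (k + 1) (by omega) hkn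
    have hk := hrev (k + 1) (by omega) hkn
    rw [add_sub_cancel_right] at this hk
    linear_combination -(π (k + 1)) * this + (h k - h (k + 1)) * hk

lemma eq_two_div_mul_sum_of_mul_eq {ι : Type*} {r d : ℝ} {s : Finset ι} {g π : ι → ℝ}
    (hr : r ≠ 0) (h : r * d = ∑ l ∈ s, π l * (2 * g l)) : d = 2 / r * ∑ l ∈ s, g l * π l := by
  rw [div_mul_eq_mul_div, eq_div_iff hr, mul_sum, mul_comm, h]
  exact sum_congr rfl fun _ _ => by ring

lemma ENNReal.ofReal_sum_mul_sum {ι κ : Type*} (s : Finset ι) (t : ι → Finset κ) {w : ι → ℝ}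
    {G : κ → ℝ≥0∞} {v : κ → ℝ} (hw : ∀ i, 0 ≤ w i) (hG : ∀ i ∈ s, ∀ l ∈ t i, G l ≠ ⊤)
    (hv : ∀ l, 0 ≤ v l) :
    ENNReal.ofReal (∑ i ∈ s, w i * ∑ l ∈ t i, (G l).toReal * v l)
      = ∑ i ∈ s, ENNReal.ofReal (w i) * ∑ l ∈ t i, G l * ENNReal.ofReal (v l) := by
  rw [ENNReal.ofReal_sum_of_nonneg fun i _ =>
    mul_nonneg (hw i) (Finset.sum_nonneg fun l _ => mul_nonneg ENNReal.toReal_nonneg (hv l))]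
  refine Finset.sum_congr rfl fun i hi => ?_
  rw [ENNReal.ofReal_mul (hw i), ENNReal.ofReal_sum_of_nonneg fun l _ =>
    mul_nonneg ENNReal.toReal_nonneg (hv l)]
  congr 1
  refine Finset.sum_congr rfl fun l hl => ?_
  rw [ENNReal.ofReal_mul ENNReal.toReal_nonneg, ENNReal.ofReal_toReal (hG i hi l hl)]

namespace BDChain

lemma IsStationary.nonneg {b a : ℤ} {c : BDChain b a} {π : ℤ → ℝ} (hπ : c.IsStationary π) (x : ℤ) :
    0 ≤ π x := by
  by_cases hx : b ≤ x ∧ x ≤ a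
  · exact (hπ.1 x hx.1 hx.2).le
  · rw [hπ.2.1 x (by omega)]

variable {b a : ℤ} (c : BDChain b a)

lemma p_nonneg (x : ℤ) : 0 ≤ c.p x := by
  by_cases h : b ≤ x ∧ x ≤ a - 1
  · exact (c.p_pos x h.1 h.2).le
  · rw [c.p_zero x (by omega)]

lemma q_nonneg (x : ℤ) : 0 ≤ c.q x := by
  by_cases h : b + 1 ≤ x ∧ x ≤ a
  · exact (c.q_pos x h.1 h.2).le
  · rw [c.q_zero x (by omega)]

lemma p_add_q_le_one (x : ℤ) : c.p x + c.q x ≤ 1 := by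
  by_cases h : b ≤ x ∧ x ≤ a
  · exact c.r_nonneg x h.1 h.2
  · rw [c.p_zero x (by omega), c.q_zero x (by omega)]; norm_num

lemma ofReal_p_add_q_add_r (x : ℤ) :
    ENNReal.ofReal (c.p x) + ENNReal.ofReal (c.q x) + ENNReal.ofReal (1 - c.p x - c.q x) = 1 := by
  rw [← ENNReal.ofReal_add (c.p_nonneg x) (c.q_nonneg x),
    ← ENNReal.ofReal_add (add_nonneg (c.p_nonneg x) (c.q_nonneg x))
      (by linarith [c.p_add_q_le_one x])]
  simp

-- The transition operator `P` of the chain: `(P g) x = E_x[g(X_1)]`.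
def stepMean (g : ℤ → ℝ≥0∞) (x : ℤ) : ℝ≥0∞ :=
  ENNReal.ofReal (c.p x) * g (x + 1) + ENNReal.ofReal (c.q x) * g (x - 1)
    + ENNReal.ofReal (1 - c.p x - c.q x) * g x

lemma tsum_bdStep_mul (g : ℤ → ℝ≥0∞) (x : ℤ) :
    ∑' y, ENNReal.ofReal (bdStep c.p c.q x y) * g y = c.stepMean g x := by
  rw [tsum_eq_sum (s := {x + 1, x - 1, x}) fun y hy => by
    simp only [Finset.mem_insert, Finset.mem_singleton, not_or] at hy
    simp [bdStep, hy.1, hy.2.1, hy.2.2]]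
  have h₁ : x + 1 ≠ x - 1 := by omega
  have h₂ : x - 1 ≠ x := by omega
  rw [Finset.sum_insert (by simp [h₁]), Finset.sum_insert (by simp [h₂]),
    Finset.sum_singleton, stepMean]
  simp [bdStep, add_assoc, h₁.symm, h₂.symm]

lemma stepMean_const_mul (r : ℝ≥0∞) (g : ℤ → ℝ≥0∞) (x : ℤ) :
    c.stepMean (fun y => r * g y) x = r * c.stepMean g x := by
  simp only [stepMean]; ring

lemma tsum_stepMean (g : ℕ → ℤ → ℝ≥0∞) (x : ℤ) :
    ∑' t, c.stepMean (g t) x = c.stepMean (fun y => ∑' t, g t y) x := by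
  simp only [stepMean, ENNReal.tsum_add, ENNReal.tsum_mul_left]

lemma stepMean_mono_on {g h : ℤ → ℝ≥0∞} (hgh : ∀ y ∈ Set.Icc b a, g y ≤ h y) {x : ℤ}
    (hx : x ∈ Set.Icc b a) : c.stepMean g x ≤ c.stepMean h x := by
  obtain ⟨hbx, hxa⟩ := hx
  refine add_le_add (add_le_add ?_ ?_) (mul_le_mul_right (hgh x ⟨hbx, hxa⟩) _)
  · by_cases hxa' : x + 1 ≤ a
    · exact mul_le_mul_right (hgh _ ⟨by omega, hxa'⟩) _
    · simp [c.p_zero x (by omega)]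
  · by_cases hbx' : b ≤ x - 1
    · exact mul_le_mul_right (hgh _ ⟨hbx', by omega⟩) _
    · simp [c.q_zero x (by omega)]

lemma stepMean_lt_one {g : ℤ → ℝ≥0∞} (hg : ∀ y, g y ≤ 1) {x : ℤ}
    (hx : (0 < c.p x ∧ g (x + 1) < 1) ∨ (0 < c.q x ∧ g (x - 1) < 1)) : c.stepMean g x < 1 := by
  have hle : ∀ r y, ENNReal.ofReal r * g y ≤ ENNReal.ofReal r := fun r y =>
    mul_le_of_le_one_right' (hg y)
  have hfin : ∀ r y, ENNReal.ofReal r * g y ≠ ⊤ := fun r y =>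
    ne_top_of_le_ne_top ENNReal.ofReal_ne_top (hle r y)
  have hlt : ∀ r y, 0 < r → g y < 1 → ENNReal.ofReal r * g y < ENNReal.ofReal r := fun r y hr hy =>
    (ENNReal.mul_lt_mul_right (by simpa using hr) ENNReal.ofReal_ne_top hy).trans_eq (mul_one _)
  rw [← c.ofReal_p_add_q_add_r x, stepMean]
  refine ENNReal.add_lt_add_of_lt_of_le (hfin _ _) ?_ (hle _ _)
  rcases hx with ⟨hp, hg'⟩ | ⟨hq, hg'⟩
  · exact ENNReal.add_lt_add_of_lt_of_le (hfin _ _) (hlt _ _ hp hg') (hle _ _)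
  · exact ENNReal.add_lt_add_of_le_of_lt (hfin _ _) (hle _ _) (hlt _ _ hq hg')

lemma toReal_stepMean {g : ℤ → ℝ≥0∞} {x : ℤ} (hg : c.stepMean g x ≠ ⊤) :
    (c.stepMean g x).toReal = c.p x * (g (x + 1)).toReal + c.q x * (g (x - 1)).toReal
      + (1 - c.p x - c.q x) * (g x).toReal := by
  have hr : 0 ≤ 1 - c.p x - c.q x := by linarith [c.p_add_q_le_one x]
  rw [stepMean] at hg ⊢
  obtain ⟨hpq, hr'⟩ := ENNReal.add_ne_top.1 hg
  obtain ⟨hp', hq'⟩ := ENNReal.add_ne_top.1 hpq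
  rw [ENNReal.toReal_add hpq hr', ENNReal.toReal_add hp' hq']
  simp only [ENNReal.toReal_mul, ENNReal.toReal_ofReal (c.p_nonneg x),
    ENNReal.toReal_ofReal (c.q_nonneg x), ENNReal.toReal_ofReal hr]

lemma toReal_poisson {F H : ℤ → ℝ≥0∞} {x : ℤ} (hH : H x = F x + c.stepMean H x)
    (hx : H x ≠ ⊤) :
    c.p x * ((H (x + 1)).toReal - (H x).toReal) + c.q x * ((H (x - 1)).toReal - (H x).toReal)
      + (F x).toReal = 0 := by
  rw [hH] at hx
  obtain ⟨hF, hP⟩ := ENNReal.add_ne_top.1 hx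
  have := congrArg ENNReal.toReal hH
  rw [ENNReal.toReal_add hF hP, c.toReal_stepMean hP] at this
  linarith

lemma law_inter_prefix_succ (x : ℤ) {t : ℕ} {E : Set (ℕ → ℤ)} {z : ℤ}
    (hE : ∀ ω ∈ E, ∀ ω' : ℕ → ℤ, (∀ i ≤ t, ω' i = ω i) → ω' ∈ E) (hz : ∀ ω ∈ E, ω t = z)
    (u : ℕ → ℤ) :
    c.law x (E ∩ {ω | ∀ i ≤ t, ω i = u i} ∩ {ω | ω (t + 1) = u (t + 1)})
      = c.law x (E ∩ {ω | ∀ i ≤ t, ω i = u i}) * ENNReal.ofReal (bdStep c.p c.q z (u (t + 1))) := by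
  by_cases hu : u ∈ E
  · have hsub : E ∩ {ω | ∀ i ≤ t, ω i = u i} = {ω | ∀ i ≤ t, ω i = u i} :=
      Set.inter_eq_right.2 fun ω hω => hE u hu ω hω
    rw [hsub, prefix_inter_eq, c.markov, hz u hu]
  · rw [Set.eq_empty_of_forall_notMem fun ω (hω : ω ∈ E ∩ _) =>
      hu (hE ω hω.1 u fun i hi => (hω.2 i hi).symm)]
    simp

lemma law_inter_eq_mul_bdStep (x : ℤ) {t : ℕ} {E : Set (ℕ → ℤ)} {z y : ℤ}
    (hEm : MeasurableSet E) (hE : ∀ ω ∈ E, ∀ ω' : ℕ → ℤ, (∀ i ≤ t, ω' i = ω i) → ω' ∈ E)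
    (hz : ∀ ω ∈ E, ω t = z) :
    c.law x (E ∩ {ω | ω (t + 1) = y}) = c.law x E * ENNReal.ofReal (bdStep c.p c.q z y) := by
  -- split `E` according to the first `t + 1` values of the path
  let u : (Fin (t + 1) → ℤ) → ℕ → ℤ := fun v i => if h : i < t + 1 then v ⟨i, h⟩ else y
  let piece v := E ∩ {ω | ∀ i ≤ t, ω i = u v i}
  have hu : ∀ v (i : Fin (t + 1)), u v i = v i := fun v i => dif_pos i.2
  have hunion : E = ⋃ v, piece v := by
    ext ω
    simp only [Set.mem_iUnion, piece, Set.mem_inter_iff]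
    exact ⟨fun hω => ⟨fun i => ω i, hω, fun i hi =>
      (hu (fun j => ω j) ⟨i, Nat.lt_succ_of_le hi⟩).symm⟩, fun ⟨_, hω, _⟩ => hω⟩
  have hdisj : Pairwise (Function.onFun Disjoint piece) := fun v w hvw =>
    Set.disjoint_left.2 fun ω hv hw => hvw <| funext fun i => by
      rw [← hu v i, ← hu w i, ← hv.2 i (Nat.lt_succ_iff.1 i.2), ← hw.2 i (Nat.lt_succ_iff.1 i.2)]
  have hmeas : ∀ v, MeasurableSet (piece v) := fun v => hEm.inter (measurableSet_prefix _ _)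
  calc c.law x (E ∩ {ω | ω (t + 1) = y})
      = ∑' v, c.law x (piece v ∩ {ω | ω (t + 1) = y}) := by
        conv_lhs => rw [hunion, Set.iUnion_inter]
        exact measure_iUnion (fun v w hvw => (hdisj hvw).mono Set.inter_subset_left
          Set.inter_subset_left) fun v => (hmeas v).inter (measurableSet_coord_eq _ _)
    _ = ∑' v, c.law x (piece v) * ENNReal.ofReal (bdStep c.p c.q z y) :=
        tsum_congr fun v => by
          rw [← show u v (t + 1) = y from dif_neg (lt_irrefl _)]
          exact c.law_inter_prefix_succ x hE hz (u v)
    _ = c.law x E * ENNReal.ofReal (bdStep c.p c.q z y) := by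
        rw [ENNReal.tsum_mul_right, ← measure_iUnion hdisj hmeas, ← hunion]

lemma ae_start (x : ℤ) : ∀ᵐ ω ∂c.law x, ω 0 = x := by
  have := c.prob x
  rw [ae_iff_measure_eq (measurableSet_coord_eq 0 x).nullMeasurableSet, c.init, measure_univ]

def survival (n : ℤ) (t : ℕ) (x : ℤ) : ℝ≥0∞ := c.law x (avoidUpTo {n} t)

lemma survival_self (n : ℤ) (t : ℕ) : c.survival n t n = 0 := by
  refine measure_eq_zero_iff_ae_notMem.2 ?_
  filter_upwards [c.ae_start n] with ω hω h using h 0 t.zero_le hω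

lemma survival_zero {n x : ℤ} (hx : x ≠ n) : c.survival n 0 x = 1 := by
  have := c.prob x
  refine (measure_congr (eventuallyEq_set.2 ?_)).trans (measure_univ (μ := c.law x))
  filter_upwards [c.ae_start x] with ω hω
  simp [avoidUpTo, hω, hx]

lemma survival_le_one (n : ℤ) (t : ℕ) (x : ℤ) : c.survival n t x ≤ 1 :=
  have := c.prob x
  prob_le_one

def tabooProb (n x : ℤ) (t : ℕ) (z : ℤ) : ℝ≥0∞ :=
  c.law x (avoidUpTo {n} t ∩ {ω | ω t = z})

def tabooStep (n x y : ℤ) : ℝ≥0∞ := if y = n then 0 else ENNReal.ofReal (bdStep c.p c.q x y)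

lemma tabooProb_zero (n x z : ℤ) : c.tabooProb n x 0 z = if z = x ∧ x ≠ n then 1 else 0 := by
  have := c.prob x
  have hae : (avoidUpTo {n} 0 ∩ {ω | ω 0 = z} : Set (ℕ → ℤ)) =ᵐ[c.law x]
      (if z = x ∧ x ≠ n then Set.univ else ∅ : Set (ℕ → ℤ)) := by
    refine eventuallyEq_set.2 ?_
    filter_upwards [c.ae_start x] with ω hω
    split_ifs with h <;> simp [avoidUpTo, hω] <;> grind
  rw [tabooProb, measure_congr hae]
  split_ifs <;> simp

lemma tabooProb_self (n x : ℤ) (t : ℕ) : c.tabooProb n x t n = 0 :=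
  measure_mono_null (fun _ hω => absurd hω.2 (hω.1 t le_rfl)) measure_empty

lemma tabooProb_succ (n x y : ℤ) (t : ℕ) :
    c.tabooProb n x (t + 1) y = ∑' z, c.tabooProb n x t z * c.tabooStep n z y := by
  by_cases hy : y = n
  · simp [hy, tabooProb_self, tabooStep]
  let E z := avoidUpTo {n} t ∩ {ω : ℕ → ℤ | ω t = z}
  have hunion : avoidUpTo {n} (t + 1) ∩ {ω | ω (t + 1) = y} = ⋃ z, E z ∩ {ω | ω (t + 1) = y} := by
    ext ω
    simp only [E, avoidUpTo, Set.mem_iUnion, Set.mem_inter_iff, Set.mem_ofPred_eq,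
      Nat.le_succ_iff, or_imp, forall_and, forall_eq]
    constructor
    · rintro ⟨⟨h1, -⟩, h3⟩; exact ⟨ω t, ⟨h1, rfl⟩, h3⟩
    · rintro ⟨z, ⟨h1, -⟩, h3⟩; exact ⟨⟨h1, by simp [h3, hy]⟩, h3⟩
  have hmeas : ∀ z, MeasurableSet (E z) := fun z =>
    (measurableSet_avoidUpTo (measurableSet_singleton n) t).inter (measurableSet_coord_eq t z)
  have hdisj : Pairwise (Function.onFun Disjoint fun z => E z ∩ {ω | ω (t + 1) = y}) :=
    fun z w hzw => Set.disjoint_left.2 fun ω hz hw => hzw (hz.1.2.symm.trans hw.1.2)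
  rw [tabooProb, hunion, measure_iUnion hdisj fun z =>
    (hmeas z).inter (measurableSet_coord_eq (t + 1) y)]
  refine tsum_congr fun z => ?_
  rw [tabooStep, if_neg hy]
  exact c.law_inter_eq_mul_bdStep x (hmeas z) (fun ω hω ω' h =>
    ⟨fun i hi => h i hi ▸ hω.1 i hi, (h t le_rfl).trans hω.2⟩) fun ω hω => hω.2

lemma tabooProb_succ' {n x : ℤ} (hx : x ≠ n) (t : ℕ) (z : ℤ) :
    c.tabooProb n x (t + 1) z = ∑' y, c.tabooStep n x y * c.tabooProb n y t z := by
  induction t generalizing z with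
  | zero =>
    rw [tabooProb_succ, tsum_eq_single x fun y hy => by simp [tabooProb_zero, hy],
      tsum_eq_single z fun y hy => by simp [tabooProb_zero, Ne.symm hy]]
    by_cases hz : z = n <;> simp [tabooProb_zero, hx, hz, tabooStep]
  | succ t ih =>
    simp_rw [c.tabooProb_succ n _ z (t + 1), ih, ← ENNReal.tsum_mul_right]
    rw [ENNReal.tsum_comm]
    simp_rw [c.tabooProb_succ n _ z t, ← ENNReal.tsum_mul_left, mul_assoc]

lemma survival_eq_tsum_tabooProb (n : ℤ) (t : ℕ) (x : ℤ) :
    c.survival n t x = ∑' z, c.tabooProb n x t z := by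
  calc c.survival n t x = c.law x (⋃ z, avoidUpTo {n} t ∩ {ω | ω t = z}) := by
        rw [← Set.inter_iUnion, Set.iUnion_eq_univ_iff.2 fun ω => ⟨ω t, rfl⟩, Set.inter_univ,
          survival]
    _ = ∑' z, c.tabooProb n x t z := measure_iUnion (fun z w hzw => Set.disjoint_left.2
        fun ω hz hw => hzw (hz.2.symm.trans hw.2)) fun z =>
          (measurableSet_avoidUpTo (measurableSet_singleton n) t).inter (measurableSet_coord_eq t z)

lemma survival_succ {n x : ℤ} (hx : x ≠ n) (t : ℕ) :
    c.survival n (t + 1) x = c.stepMean (c.survival n t) x := by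
  rw [survival_eq_tsum_tabooProb]
  simp_rw [c.tabooProb_succ' hx]
  rw [ENNReal.tsum_comm]
  simp_rw [ENNReal.tsum_mul_left, ← survival_eq_tsum_tabooProb, ← tsum_bdStep_mul]
  refine tsum_congr fun y => ?_
  by_cases hy : y = n
  · simp [hy, survival_self]
  · simp [tabooStep, hy]

lemma eT_eq_tsum_survival (x n : ℤ) : c.eT x n = ∑' t, c.survival n t x := by
  have hmeas := measurableSet_avoidUpTo (measurableSet_singleton n)
  rw [eT, lintegral_congr (hitTime_eq_tsum_indicator {n}),
    lintegral_tsum fun t => (measurable_const.indicator (hmeas t)).aemeasurable]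
  simp [lintegral_indicator_const (hmeas _), survival]

lemma eT2_add_eT_eq_tsum_survival (x n : ℤ) :
    c.eT2 x n + c.eT x n = ∑' t : ℕ, (2 * (t : ℝ≥0∞) + 2) * c.survival n t x := by
  have hmeas := measurableSet_avoidUpTo (measurableSet_singleton n)
  rw [eT2, eT, ← lintegral_add_right _ (measurable_hitTime n),
    lintegral_congr (hitTime_sq_add_hitTime_eq_tsum_indicator {n}),
    lintegral_tsum fun t => (measurable_const.indicator (hmeas t)).aemeasurable]
  simp [lintegral_indicator_const (hmeas _), survival]

lemma eT2_add_eT_self (n : ℤ) : c.eT2 n n + c.eT n n = 0 := by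
  simp [eT2_add_eT_eq_tsum_survival, survival_self]

lemma eT2_add_eT_eq_two_mul_add_stepMean {n x : ℤ} (hx : x ≠ n) :
    c.eT2 x n + c.eT x n = 2 * c.eT x n + c.stepMean (fun y => c.eT2 y n + c.eT y n) x := by
  have hweight : ∀ t : ℕ, (2 * ((t + 1 : ℕ) : ℝ≥0∞) + 2) * c.survival n (t + 1) x
      = 2 * c.survival n (t + 1) x
        + c.stepMean (fun y => (2 * (t : ℝ≥0∞) + 2) * c.survival n t y) x := by
    intro t
    rw [stepMean_const_mul, ← c.survival_succ hx]
    push_cast; ring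
  have hH := c.eT2_add_eT_eq_tsum_survival x n
  have hG := c.eT_eq_tsum_survival x n
  rw [tsum_eq_zero_add' ENNReal.summable, c.survival_zero hx] at hH hG
  rw [hH, hG]
  simp only [eT2_add_eT_eq_tsum_survival, hweight, ENNReal.tsum_add, ENNReal.tsum_mul_left,
    tsum_stepMean]
  ring

lemma survival_lt_one {n : ℤ} (hn : n ∈ Set.Icc b a) {t : ℕ} :
    ∀ {x}, x ∈ Set.Icc b a → (x - n).natAbs ≤ t → c.survival n t x < 1 := by
  obtain ⟨hbn, hna⟩ := hn
  induction t with
  | zero =>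
    intro x _ hxn
    rw [show x = n by omega, survival_self]
    exact zero_lt_one
  | succ t ih =>
    intro x ⟨hbx, hxa⟩ hxn
    rcases lt_trichotomy x n with hlt | rfl | hgt
    · rw [c.survival_succ hlt.ne]
      exact c.stepMean_lt_one (c.survival_le_one n t)
        (.inl ⟨c.p_pos x hbx (by omega), ih ⟨by omega, by omega⟩ (by omega)⟩)
    · rw [survival_self]
      exact zero_lt_one
    · rw [c.survival_succ hgt.ne']
      exact c.stepMean_lt_one (c.survival_le_one n t)
        (.inr ⟨c.q_pos x (by omega) hxa, ih ⟨by omega, by omega⟩ (by omega)⟩)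

lemma survival_add_le {n : ℤ} {m : ℕ} {ρ : ℝ≥0∞}
    (hρ : ∀ y ∈ Set.Icc b a, c.survival n m y ≤ ρ) (t : ℕ) :
    ∀ x ∈ Set.Icc b a, c.survival n (t + m) x ≤ ρ * c.survival n t x := by
  induction t with
  | zero =>
    intro x hx
    by_cases hxn : x = n
    · simp [hxn, survival_self]
    · simpa [c.survival_zero hxn] using hρ x hx
  | succ t ih =>
    intro x hx
    by_cases hxn : x = n
    · simp [hxn, survival_self]
    · rw [show t + 1 + m = t + m + 1 by omega, c.survival_succ hxn, c.survival_succ hxn,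
        ← stepMean_const_mul]
      exact c.stepMean_mono_on ih hx

lemma survival_le_pow_div {n : ℤ} {m : ℕ} {ρ : ℝ≥0∞}
    (hρ : ∀ y ∈ Set.Icc b a, c.survival n m y ≤ ρ) (t : ℕ) {x : ℤ} (hx : x ∈ Set.Icc b a) :
    c.survival n t x ≤ ρ ^ (t / m) := by
  suffices ∀ k r, c.survival n (k * m + r) x ≤ ρ ^ k by
    simpa [Nat.div_add_mod'] using this (t / m) (t % m)
  intro k r
  induction k with
  | zero => simpa using c.survival_le_one n r x
  | succ k ih =>
    rw [show (k + 1) * m + r = k * m + r + m by ring, pow_succ']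
    exact (c.survival_add_le hρ _ x hx).trans (mul_le_mul_right ih ρ)

lemma eT2_add_eT_ne_top {n x : ℤ} (hn : n ∈ Set.Icc b a) (hx : x ∈ Set.Icc b a) :
    c.eT2 x n + c.eT x n ≠ ⊤ := by
  set m := (a - b).toNat + 1
  set ρ := (Finset.Icc b a).sup fun y => c.survival n m y
  have hρ1 : ρ < 1 := Finset.sup_lt_iff (by simp) |>.2 fun y hy =>
    c.survival_lt_one hn (by simpa using hy) (by simp at hy; grind)
  have hρ : ∀ y ∈ Set.Icc b a, c.survival n m y ≤ ρ := fun y hy =>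
    Finset.le_sup (f := fun y => c.survival n m y) (by simpa using hy)
  rw [eT2_add_eT_eq_tsum_survival]
  refine ne_top_of_le_ne_top (ENNReal.mul_ne_top (a := 2) (by simp)
    (ENNReal.tsum_add_one_mul_pow_div_ne_top hρ1 (Nat.succ_pos _ : 0 < m))) ?_
  rw [← ENNReal.tsum_mul_left]
  refine ENNReal.tsum_le_tsum fun t => ?_
  calc (2 * (t : ℝ≥0∞) + 2) * c.survival n t x ≤ (2 * (t : ℝ≥0∞) + 2) * ρ ^ (t / m) :=
        mul_le_mul_right (c.survival_le_pow_div hρ t hx) _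
    _ = 2 * (((t : ℝ≥0∞) + 1) * ρ ^ (t / m)) := by ring

lemma eT_ne_top {n x : ℤ} (hn : n ∈ Set.Icc b a) (hx : x ∈ Set.Icc b a) : c.eT x n ≠ ⊤ :=
  ne_top_of_le_ne_top (c.eT2_add_eT_ne_top hn hx) le_add_self

lemma poisson_eT2_add_eT {n x : ℤ} (hn : n ∈ Set.Icc b a) (hx : x ∈ Set.Icc b a) (hxn : x ≠ n) :
    let h := fun y => (c.eT2 y n + c.eT y n).toReal
    c.p x * (h (x + 1) - h x) + c.q x * (h (x - 1) - h x) + 2 * (c.eT x n).toReal = 0 := by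
  simpa using c.toReal_poisson (F := fun y => 2 * c.eT y n) (H := fun y => c.eT2 y n + c.eT y n)
    (c.eT2_add_eT_eq_two_mul_add_stepMean hxn)
    (c.eT2_add_eT_ne_top hn hx)

theorem eT2_add_eT_of_lt {π : ℤ → ℝ} (hπ : c.IsStationary π) {n j : ℤ} (hbn : b ≤ n)
    (hnj : n < j) (hja : j ≤ a) :
    c.eT2 j n + c.eT j n = ∑ k ∈ Icc (n + 1) j, ENNReal.ofReal (2 / (c.q k * π k))
      * ∑ l ∈ Icc k a, c.eT l n * ENNReal.ofReal (π l) := by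
  have hπ0 := hπ.nonneg
  obtain ⟨hpos, -, -, hrev⟩ := hπ
  set h := fun y => (c.eT2 y n + c.eT y n).toReal
  have hflux : ∀ k, n < k → k ≤ a →
      c.q k * π k * (h k - h (k - 1)) = ∑ l ∈ Icc k a, π l * (2 * (c.eT l n).toReal) :=
    fun k => flux_eq_sum_Icc_right (c.p_zero a (.inr le_rfl))
      (fun x _ hxa => hrev x (by omega) hxa)
      fun x hnx hxa => c.poisson_eT2_add_eT ⟨hbn, by omega⟩ ⟨by omega, hxa⟩ (by omega)
  have hreal : h j = ∑ k ∈ Icc (n + 1) j, 2 / (c.q k * π k)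
      * ∑ l ∈ Icc k a, (c.eT l n).toReal * π l := by
    rw [← sub_zero (h j), ← show h n = 0 by simp [h, eT2_add_eT_self],
      ← sum_Icc_sub_sub_one h hnj.le]
    refine sum_congr rfl fun k hk => ?_
    obtain ⟨hnk, hkj⟩ := mem_Icc.1 hk
    exact eq_two_div_mul_sum_of_mul_eq
      (mul_ne_zero (c.q_pos k (by omega) (by omega)).ne' (hpos k (by omega) (by omega)).ne')
      (hflux k (by omega) (by omega))
  rw [← ENNReal.ofReal_toReal (c.eT2_add_eT_ne_top ⟨hbn, by omega⟩ ⟨by omega, hja⟩)]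
  refine (congrArg ENNReal.ofReal hreal).trans (ENNReal.ofReal_sum_mul_sum _ _
    (fun k => div_nonneg zero_le_two (mul_nonneg (c.q_nonneg k) (hπ0 k)))
    (fun k hk l hl => c.eT_ne_top ⟨hbn, by omega⟩ ?_) hπ0)
  simp only [mem_Icc] at hk hl
  exact ⟨by omega, hl.2⟩

theorem eT2_add_eT_of_gt {π : ℤ → ℝ} (hπ : c.IsStationary π) {j n : ℤ} (hbj : b ≤ j)
    (hjn : j < n) (hna : n ≤ a) :
    c.eT2 j n + c.eT j n = ∑ k ∈ Icc j (n - 1), ENNReal.ofReal (2 / (c.p k * π k))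
      * ∑ l ∈ Icc b k, c.eT l n * ENNReal.ofReal (π l) := by
  have hπ0 := hπ.nonneg
  obtain ⟨hpos, -, -, hrev⟩ := hπ
  set h := fun y => (c.eT2 y n + c.eT y n).toReal
  have hflux : ∀ k, b ≤ k → k < n →
      c.p k * π k * (h k - h (k + 1)) = ∑ l ∈ Icc b k, π l * (2 * (c.eT l n).toReal) :=
    fun k => flux_eq_sum_Icc_left (c.q_zero b (.inl le_rfl))
      (fun x hbx hxn => hrev x hbx (by omega))
      fun x hbx hxn => c.poisson_eT2_add_eT ⟨by omega, hna⟩ ⟨hbx, by omega⟩ (by omega)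
  have hreal : h j = ∑ k ∈ Icc j (n - 1), 2 / (c.p k * π k)
      * ∑ l ∈ Icc b k, (c.eT l n).toReal * π l := by
    rw [← sub_zero (h j), ← show h n = 0 by simp [h, eT2_add_eT_self],
      ← sum_Icc_sub_add_one h hjn.le]
    refine sum_congr rfl fun k hk => ?_
    obtain ⟨hjk, hkn⟩ := mem_Icc.1 hk
    exact eq_two_div_mul_sum_of_mul_eq
      (mul_ne_zero (c.p_pos k (by omega) (by omega)).ne' (hpos k (by omega) (by omega)).ne')
      (hflux k (by omega) (by omega))
  rw [← ENNReal.ofReal_toReal (c.eT2_add_eT_ne_top ⟨by omega, hna⟩ ⟨hbj, by omega⟩)]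
  refine (congrArg ENNReal.ofReal hreal).trans (ENNReal.ofReal_sum_mul_sum _ _
    (fun k => div_nonneg zero_le_two (mul_nonneg (c.p_nonneg k) (hπ0 k)))
    (fun k hk l hl => c.eT_ne_top ⟨by omega, hna⟩ ?_) hπ0)
  simp only [mem_Icc] at hk hl
  exact ⟨hl.1, by omega⟩

end BDChain

theorem second_moment_identities_general {b a : ℤ} (c : BDChain b a)
    (π : ℤ → ℝ) (hπ : c.IsStationary π) :
    (∀ n j : ℤ, b ≤ n → n < j → j ≤ a →
      c.eT2 j n + c.eT j n
        = ∑ k ∈ Finset.Icc (n + 1) j, ENNReal.ofReal (2 / (c.q k * π k))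
            * ∑ l ∈ Finset.Icc k a, c.eT l n * ENNReal.ofReal (π l)) ∧
    (∀ j n : ℤ, b ≤ j → j < n → n ≤ a →
      c.eT2 j n + c.eT j n
        = ∑ k ∈ Finset.Icc j (n - 1), ENNReal.ofReal (2 / (c.p k * π k))
            * ∑ l ∈ Finset.Icc b k, c.eT l n * ENNReal.ofReal (π l)) :=
  ⟨fun _ _ hbn hnj hja => c.eT2_add_eT_of_lt hπ hbn hnj hja,
    fun _ _ hbj hjn hna => c.eT2_add_eT_of_gt hπ hbj hjn hna⟩

/-- Second-moment formulas for hitting times of an irreducible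
birth-and-death chain on `⟦b,a⟧` with reversible invariant probability measure `π`:
(1) for `b ≤ n < j ≤ a`,
`E[T_{j→n}²] = Σ_{k=n+1}^{j} (2/(q_k π(k))) Σ_{l=k}^{a} E[T_{l→n}] π(l) − E[T_{j→n}]`;
(2) for `b ≤ j < n ≤ a`,
`E[T_{j→n}²] = Σ_{k=j}^{n−1} (2/(p_k π(k))) Σ_{l=b}^{k} E[T_{l→n}] π(l) − E[T_{j→n}]`.
(Both identities are stated with the subtracted mean moved to the left-hand side,
an equivalent form avoiding subtraction in `ℝ≥0∞`.) -/
theorem second_moment_identities {b a : ℤ} (hab : b < a) (c : BDChain b a)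
    (π : ℤ → ℝ) (hπ : c.IsStationary π) :
    (∀ n j : ℤ, b ≤ n → n < j → j ≤ a →
      c.eT2 j n + c.eT j n
        = ∑ k ∈ Finset.Icc (n + 1) j, ENNReal.ofReal (2 / (c.q k * π k))
            * ∑ l ∈ Finset.Icc k a, c.eT l n * ENNReal.ofReal (π l)) ∧
    (∀ j n : ℤ, b ≤ j → j < n → n ≤ a →
      c.eT2 j n + c.eT j n
        = ∑ k ∈ Finset.Icc j (n - 1), ENNReal.ofReal (2 / (c.p k * π k))
            * ∑ l ∈ Finset.Icc b k, c.eT l n * ENNReal.ofReal (π l)) :=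
  second_moment_identities_general c π hπ
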